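/- Let B be a left semi-brace such that E is an ideal of B. Then B^(n) = G^(n) + E for every positive integer n. -/
import Mathlib


/-- A left semi-brace: `(B,+)` is a left cancellative semigroup, `(B,*)` is a group
(whose identity `1` plays the role of `0` in the additive notation of the paper, and
`a⁻¹` plays the role of `a⁻`), and `a ∘ (b + c) = a ∘ b + a ∘ (a⁻ + c)` holds. -/
class LeftSemiBrace (B : Type*) extends Group B, Add B where
  add_assoc : ∀ a b c : B, a + b + c = a + (b + c)
  add_left_cancel : ∀ a b c : B, a + b = a + c → b = c
  circ_add : ∀ a b c : B, a * (b + c) = a * b + a * (a⁻¹ + c)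

namespace LeftSemiBrace

variable {B : Type*} [LeftSemiBrace B]

/-- The set `E` of additive idempotents. -/
def E (B : Type*) [LeftSemiBrace B] : Set B := {e | e + e = e}

/-- The set `G = B + 0`. -/
def G (B : Type*) [LeftSemiBrace B] : Set B := {x | ∃ b : B, x = b + 1}

/-- `λ_a (b) = a ∘ (a⁻ + b)`. -/
def lam (a b : B) : B := a * (a⁻¹ + b)

/-- `ρ_b (a) = (a⁻ + b)⁻ ∘ b`. -/
def rho (b a : B) : B := (a⁻¹ + b)⁻¹ * b

/-- `a · b = λ_a(a⁻) + a ∘ b + λ_b(b⁻)`. -/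
def dot (a b : B) : B := lam a a⁻¹ + a * b + lam b b⁻¹

/-- The group part `g_b = b + 0` of an element `b`. -/
def gp (b : B) : B := b + 1

/-- The additive inverse (within the group `(G,+)`) of the group part of an element:
for `g ∈ G` one has `neg g = -g`, since `-g_a = λ_a(a⁻) = a ∘ (a⁻ + a⁻)`. -/
def neg (a : B) : B := a * (a⁻¹ + a⁻¹)

/-- The idempotent part `e_b = -g_b + b` of an element `b`. -/
def ep (b : B) : B := neg (gp b) + b

/-- `S` is a subsemigroup of `(B,+)`. -/
def IsAddSubsemigroup (S : Set B) : Prop := ∀ x ∈ S, ∀ y ∈ S, x + y ∈ S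

/-- `S` is a subgroup of the multiplicative group `(B,∘)`. -/
def IsCircSubgroup (S : Set B) : Prop :=
  (1 : B) ∈ S ∧ (∀ x ∈ S, ∀ y ∈ S, x * y ∈ S) ∧ ∀ x ∈ S, x⁻¹ ∈ S

/-- `S` is a normal subgroup of the multiplicative group `(B,∘)`. -/
def IsCircNormal (S : Set B) : Prop :=
  IsCircSubgroup S ∧ ∀ x ∈ S, ∀ b : B, b * x * b⁻¹ ∈ S

/-- `S` is a subgroup of the group `(G,+)`. -/
def IsAddSubgroupOfG (S : Set B) : Prop :=
  S ⊆ G B ∧ (1 : B) ∈ S ∧ (∀ x ∈ S, ∀ y ∈ S, x + y ∈ S) ∧ ∀ x ∈ S, neg x ∈ S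

/-- `S` is a normal subgroup of the group `(G,+)`. -/
def IsAddNormalSubgroupOfG (S : Set B) : Prop :=
  IsAddSubgroupOfG S ∧ ∀ g ∈ G B, ∀ x ∈ S, g + x + neg g ∈ S

/-- `I` is an ideal of the left semi-brace `B` (Definition 17 of Catino–Colazzo–Stefanelli):
`I` is a subsemigroup of `(B,+)`, a normal subgroup of `(B,∘)`, `I ∩ G` is a normal
subgroup of `(G,+)`, `ρ_b(n) ∈ I` for all `b ∈ B`, `n ∈ I ∩ G`, and `λ_g(e) ∈ I` for all
`g ∈ G`, `e ∈ I ∩ E`. -/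
def IsIdeal (I : Set B) : Prop :=
  IsAddSubsemigroup I ∧ IsCircNormal I ∧ IsAddNormalSubgroupOfG (I ∩ G B) ∧
    (∀ b : B, ∀ n ∈ I ∩ G B, rho b n ∈ I) ∧
    (∀ g ∈ G B, ∀ e ∈ I ∩ E B, lam g e ∈ I)

/-- `I` is a left ideal of the left semi-brace `B`. -/
def IsLeftIdeal (I : Set B) : Prop :=
  (∀ x ∈ I, x + 1 ∈ I) ∧ IsAddSubgroupOfG (I ∩ G B) ∧
    (∀ g ∈ G B, ∀ x ∈ I, lam g x ∈ I) ∧ IsCircSubgroup I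

/-- The subgroup of `(G,+)` generated by a subset `S` of `G`. -/
def addClosure (S : Set B) : Set B :=
  ⋂₀ {T : Set B | S ⊆ T ∧ (1 : B) ∈ T ∧ (∀ x ∈ T, ∀ y ∈ T, x + y ∈ T) ∧ ∀ x ∈ T, neg x ∈ T}

/-- `X · Y`: the subgroup of `(G,+)` generated by `{x · y : x ∈ X, y ∈ Y}`. -/
def dotSet (X Y : Set B) : Set B := addClosure {z | ∃ x ∈ X, ∃ y ∈ Y, z = dot x y}

/-- `S + E = {s + e : s ∈ S, e ∈ E}`. -/
def addE (S : Set B) : Set B := {z | ∃ s ∈ S, ∃ e ∈ E B, z = s + e}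

/-- The right series of `B`: `rightSeries B n = B^(n+1)`, where `B^(1) = B` and
`B^(n+1) = B^(n) · B + E`. -/
def rightSeries (B : Type*) [LeftSemiBrace B] : ℕ → Set B
  | 0 => Set.univ
  | n + 1 => addE (dotSet (rightSeries B n) Set.univ)

/-- The left series of `B`: `leftSeries B n = B^(n+1)`, where `B^1 = B` and
`B^(n+1) = B · B^n + E`. -/
def leftSeries (B : Type*) [LeftSemiBrace B] : ℕ → Set B
  | 0 => Set.univ
  | n + 1 => addE (dotSet Set.univ (leftSeries B n))

/-- The right series of the skew left brace `G`: `rightSeriesG B n = G^(n+1)`, where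
`G^(1) = G` and `G^(n+1) = G^(n) · G`. -/
def rightSeriesG (B : Type*) [LeftSemiBrace B] : ℕ → Set B
  | 0 => G B
  | n + 1 => dotSet (rightSeriesG B n) (G B)

/-- The series `bracketSeries B n = B^[n+1]`, where `B^[1] = B` and `B^[n+1] = H_n + E`
with `H_n` the subgroup of `(G,+)` generated by `⋃_{i=1}^{n} B^[i] · B^[n+1-i]`. -/
def bracketSeries (B : Type*) [LeftSemiBrace B] : ℕ → Set B
  | 0 => Set.univ
  | n + 1 =>
      addE (addClosure (⋃ i : Fin (n + 1),
        dotSet (bracketSeries B i.1) (bracketSeries B (n - i.1))))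
  decreasing_by
  · exact i.isLt
  · exact Nat.lt_succ_of_le (Nat.sub_le n i.1)

/-- The socle `Soc(B) = {a ∈ B : ρ_a = ρ_0, λ_a = λ_0}`. -/
def Soc (B : Type*) [LeftSemiBrace B] : Set B :=
  {a | rho a = rho (1 : B) ∧ lam a = lam (1 : B)}

/-- The generalized socle `Zoc(B) = Soc(B) + E`. -/
def Zoc (B : Type*) [LeftSemiBrace B] : Set B :=
  {z | ∃ a ∈ Soc B, ∃ e ∈ E B, z = a + e}

/-- The lower central series of the group `(G,+)`:  `γ_1 = G` and `γ_{n+1}` is the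
subgroup of `(G,+)` generated by the additive commutators `-x - y + x + y` with
`x ∈ γ_n`, `y ∈ G`. -/
def lowerCentralSeriesG (B : Type*) [LeftSemiBrace B] : ℕ → Set B
  | 0 => G B
  | n + 1 => addClosure
      {z | ∃ x ∈ lowerCentralSeriesG B n, ∃ y ∈ G B, z = neg x + neg y + x + y}

/-- The group `(G,+)` is nilpotent. -/
def IsNilpotentGAdd (B : Type*) [LeftSemiBrace B] : Prop :=
  ∃ n : ℕ, lowerCentralSeriesG B n = {(1 : B)}

private lemma aa (a b c : B) : a + b + c = a + (b + c) := LeftSemiBrace.add_assoc a b c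

private lemma alc {a b c : B} (h : a + b = a + c) : b = c :=
  LeftSemiBrace.add_left_cancel a b c h

lemma one_add' (c : B) : (1 : B) + c = c := by
  have h := circ_add (1 : B) c c
  rw [one_mul, one_mul, inv_one, one_mul] at h
  exact (alc h).symm

lemma mul_eq_add_lam (a c : B) : a * c = a + lam a c := by
  have h := circ_add a 1 c
  rw [one_add', mul_one] at h
  exact h

lemma lam_add_dist (a b c : B) : lam a (b + c) = lam a b + lam a c := by
  have h := circ_add a b c
  rw [mul_eq_add_lam a (b + c), mul_eq_add_lam a b, aa] at h
  exact alc h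

lemma lam_mem_E (a : B) {e : B} (he : e ∈ E B) : lam a e ∈ E B := by
  have h : e + e = e := he
  show lam a e + lam a e = lam a e
  rw [← lam_add_dist, h]

lemma E_left_id {e : B} (he : e ∈ E B) (b : B) : e + b = b := by
  have h : e + e = e := he
  have h2 : e + (e + b) = e + b := by rw [← aa, h]
  exact alc h2

lemma one_mem_E : (1 : B) ∈ E B := one_add' 1

lemma lam_inv_eq_neg (a : B) : lam a a⁻¹ = neg a := rfl

lemma add_neg_self (a : B) : a + neg a = 1 := by
  have h := mul_eq_add_lam a a⁻¹
  rw [mul_inv_cancel] at h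
  exact h.symm

lemma neg_add_one (a : B) : neg a + 1 = neg a := by
  apply alc (a := a)
  rw [← aa, add_neg_self, one_add']

lemma neg_mem_G (a : B) : neg a ∈ G B := ⟨neg a, (neg_add_one a).symm⟩

lemma gp_mem_G (a : B) : gp a ∈ G B := ⟨a, rfl⟩

lemma G_add_one {g : B} (hg : g ∈ G B) : g + 1 = g := by
  obtain ⟨b, rfl⟩ := hg
  rw [aa, one_add']

lemma gp_add_neg (a : B) : gp a + neg a = 1 := by
  show a + 1 + neg a = 1
  rw [aa, one_add', add_neg_self]

lemma neg_gp_eq (a : B) : neg (gp a) = neg a :=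
  alc ((add_neg_self (gp a)).trans (gp_add_neg a).symm)

lemma gp_add_ep (a : B) : gp a + ep a = a := by
  show gp a + (neg (gp a) + a) = a
  rw [← aa, add_neg_self, one_add']

lemma ep_mem_E (a : B) : ep a ∈ E B := by
  show (neg (gp a) + a) + (neg (gp a) + a) = neg (gp a) + a
  rw [neg_gp_eq, aa (neg a) a, ← aa a, add_neg_self, one_add']

lemma e_add_one {e : B} (he : e ∈ E B) : e + 1 = 1 := E_left_id he 1

lemma gp_add_E {s e : B} (hs : s ∈ G B) (he : e ∈ E B) : gp (s + e) = s := by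
  show s + e + 1 = s
  rw [aa, e_add_one he, G_add_one hs]

/-- The key computation: if `E` is an ideal, `s ∈ G`, `e ∈ E`, then
`(s + e) · y = s · g_y`. -/
lemma dot_addE_left (hE : IsIdeal (E B)) {s e : B} (hs : s ∈ G B) (he : e ∈ E B)
    (y : B) : dot (s + e) y = dot s (gp y) := by
  have hnormal : ∀ x ∈ E B, ∀ b : B, b * x * b⁻¹ ∈ E B := hE.2.1.2
  have he1 : s⁻¹ * (s + e) ∈ E B := by
    have h : s⁻¹ * (s + e) = lam s⁻¹ e := by
      show _ = s⁻¹ * (s⁻¹⁻¹ + e)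
      rw [inv_inv]
    rw [h]
    exact lam_mem_E s⁻¹ he
  have he3 : y⁻¹ * (s⁻¹ * (s + e)) * y ∈ E B := by
    have h := hnormal _ he1 y⁻¹
    rwa [inv_inv] at h
  have hf3 : lam y (y⁻¹ * (s⁻¹ * (s + e)) * y) ∈ E B := lam_mem_E y he3
  have hmul : (s + e) * y = s * (y + lam y (y⁻¹ * (s⁻¹ * (s + e)) * y)) := by
    have h1 : (s + e) * y = s * (y * (y⁻¹ * (s⁻¹ * (s + e)) * y)) := by group
    rw [h1, mul_eq_add_lam y]
  have hsplit : s * (y + lam y (y⁻¹ * (s⁻¹ * (s + e)) * y))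
      = s * y + lam s (lam y (y⁻¹ * (s⁻¹ * (s + e)) * y)) :=
    circ_add s y _
  have hsy : s * y = s * gp y + lam s (ep y) := by
    have h := circ_add s (gp y) (ep y)
    rw [gp_add_ep] at h
    exact h
  show lam (s + e) (s + e)⁻¹ + (s + e) * y + lam y y⁻¹
      = lam s s⁻¹ + s * gp y + lam (gp y) (gp y)⁻¹
  simp only [lam_inv_eq_neg]
  have hnx : neg (s + e) = neg s := by rw [← neg_gp_eq (s + e), gp_add_E hs he]
  have hny : neg y = neg (gp y) := (neg_gp_eq y).symm
  rw [hnx, hny, hmul, hsplit, hsy]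
  simp only [aa]
  rw [E_left_id (lam_mem_E s hf3), E_left_id (lam_mem_E s (ep_mem_E y))]

lemma dot_mem_G (a b : B) : dot a b ∈ G B := by
  have h : dot a b + 1 = dot a b := by
    show lam a a⁻¹ + a * b + lam b b⁻¹ + 1 = lam a a⁻¹ + a * b + lam b b⁻¹
    rw [aa (lam a a⁻¹ + a * b)]
    simp only [lam_inv_eq_neg]
    rw [neg_add_one]
  exact ⟨dot a b, h.symm⟩

lemma G_add {g h : B} (hg : g ∈ G B) (hh : h ∈ G B) : g + h ∈ G B :=
  ⟨g + h, by rw [aa, G_add_one hh]⟩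

lemma one_mem_G : (1 : B) ∈ G B := ⟨1, (one_add' 1).symm⟩

lemma addClosure_subset {S T : Set B} (hST : S ⊆ T) (h1 : (1 : B) ∈ T)
    (hadd : ∀ x ∈ T, ∀ y ∈ T, x + y ∈ T) (hneg : ∀ x ∈ T, neg x ∈ T) :
    addClosure S ⊆ T := fun _ hx => hx T ⟨hST, h1, hadd, hneg⟩

lemma dotSet_subset_G (X Y : Set B) : dotSet X Y ⊆ G B := by
  apply addClosure_subset
  · rintro z ⟨x, -, y, -, rfl⟩
    exact dot_mem_G x y
  · exact one_mem_G
  · exact fun x hx y hy => G_add hx hy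
  · exact fun x _ => neg_mem_G x

lemma rightSeriesG_subset_G : ∀ n, rightSeriesG B n ⊆ G B
  | 0 => fun _ h => h
  | n + 1 => by
      show dotSet (rightSeriesG B n) (G B) ⊆ G B
      exact dotSet_subset_G _ _

lemma dotSet_addE (hE : IsIdeal (E B)) {X : Set B} (hX : X ⊆ G B) :
    dotSet (addE X) Set.univ = dotSet X (G B) := by
  have hgen : {z : B | ∃ x ∈ addE X, ∃ y ∈ (Set.univ : Set B), z = dot x y}
      = {z : B | ∃ x ∈ X, ∃ y ∈ G B, z = dot x y} := by
    ext z
    constructor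
    · rintro ⟨x, ⟨s, hs, e, he, rfl⟩, y, -, rfl⟩
      exact ⟨s, hs, gp y, gp_mem_G y, dot_addE_left hE (hX hs) he y⟩
    · rintro ⟨s, hs, g, _, rfl⟩
      exact ⟨s, ⟨s, hs, 1, one_mem_E, (G_add_one (hX hs)).symm⟩, g, trivial, rfl⟩
  exact congrArg addClosure hgen

/-- if `E` is an ideal of `B`, then `B^(n) = G^(n) + E` for every
positive integer `n` (here `rightSeries B n = B^(n+1)` and
`rightSeriesG B n = G^(n+1)`). -/
theorem rightSeries_eq_rightSeriesG_addE (B : Type*) [LeftSemiBrace B]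
    (hE : IsIdeal (E B)) (n : ℕ) :
    rightSeries B n = addE (rightSeriesG B n) := by
  induction n with
  | zero =>
      show Set.univ = addE (G B)
      ext b
      simp only [Set.mem_univ, true_iff]
      exact ⟨gp b, gp_mem_G b, ep b, ep_mem_E b, (gp_add_ep b).symm⟩
  | succ n ih =>
      show addE (dotSet (rightSeries B n) Set.univ)
          = addE (dotSet (rightSeriesG B n) (G B))
      rw [ih, dotSet_addE hE (rightSeriesG_subset_G n)]

end LeftSemiBrace
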